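/- Let k, l ∈ ℝ² be nonzero vectors and set m := k + l, assumed nonzero. Then the resonance relation sg(k)·|k| + sg(l)·|l| = sg(m)·|m| holds if and only if k and l are colinear, i.e. l = t·k for some real t (with t ≠ 0 and t ≠ −1). Moreover, whenever this holds one also has l·k = sg(l)·sg(k)·|l|·|k| and l·m = sg(l)·sg(m)·|l|·|m|. -/

import Mathlib

/-!
The signed norm `sg k * ‖k‖` is homogeneous of degree one under all real scalings, so colinear
vectors are resonant. Conversely, squaring the resonance relation and expanding `‖k + l‖²` gives
`⟪k, l⟫ = sg k * sg l * ‖k‖ * ‖l‖`, the equality case of Cauchy–Schwarz, which forces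
colinearity. Reading the relation as `sg l * ‖l‖ - sg m * ‖m‖ = -(sg k * ‖k‖)` for `m = k + l`
and squaring again gives `⟪l, m⟫` in the same way.
-/

/-- The generalized sign of a nonzero vector `k ∈ ℝ²`: `sg k = 1` iff `k₁ > 0` or
(`k₁ = 0` and `k₂ > 0`), and `sg k = −1` otherwise. -/
noncomputable def sg (k : EuclideanSpace ℝ (Fin 2)) : ℝ :=
  if 0 < k 0 ∨ (k 0 = 0 ∧ 0 < k 1) then 1 else -1

open scoped InnerProductSpace

def IsResonant (k l : EuclideanSpace ℝ (Fin 2)) : Prop :=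
  sg k * ‖k‖ + sg l * ‖l‖ = sg (k + l) * ‖k + l‖

lemma abs_sg (k : EuclideanSpace ℝ (Fin 2)) : |sg k| = 1 := by
  unfold sg; split_ifs <;> norm_num

lemma sg_smul_of_pos {c : ℝ} (hc : 0 < c) (k : EuclideanSpace ℝ (Fin 2)) :
    sg (c • k) = sg k := by
  simp only [sg, PiLp.smul_apply, smul_eq_mul, mul_pos_iff_of_pos_left hc, mul_eq_zero,
    hc.ne', false_or]

lemma sg_neg {k : EuclideanSpace ℝ (Fin 2)} (hk : k ≠ 0) : sg (-k) = -sg k := by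
  unfold sg
  simp only [PiLp.neg_apply, neg_pos, neg_eq_zero]
  rcases lt_trichotomy (k 0) 0 with h0 | h0 | h0
  · simp [h0, h0.not_gt, h0.ne]
  · have h1 : k 1 ≠ 0 := fun h1 => hk (by ext i; fin_cases i <;> simp [h0, h1])
    rcases h1.lt_or_gt with h1 | h1 <;> simp [h0, h1, h1.not_gt]
  · simp [h0, h0.not_gt, h0.ne']

lemma sg_smul_mul_norm (c : ℝ) (k : EuclideanSpace ℝ (Fin 2)) :
    sg (c • k) * ‖c • k‖ = c * (sg k * ‖k‖) := by
  rcases eq_or_ne k 0 with rfl | hk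
  · simp
  rcases lt_trichotomy c 0 with hc | rfl | hc
  · rw [← neg_smul_neg, sg_smul_of_pos (neg_pos.mpr hc), sg_neg hk, norm_smul, norm_neg, norm_neg,
      Real.norm_of_nonpos hc.le]
    ring
  · simp
  · rw [sg_smul_of_pos hc, norm_smul, Real.norm_of_nonneg hc.le]
    ring

lemma abs_sg_mul_norm (k : EuclideanSpace ℝ (Fin 2)) : |sg k * ‖k‖| = ‖k‖ := by
  rw [abs_mul, abs_sg, abs_norm, one_mul]

lemma real_inner_eq_mul_of_abs_eq {E : Type*} [NormedAddCommGroup E] [InnerProductSpace ℝ E]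
    {x y : E} {a b : ℝ} (ha : |a| = ‖x‖) (hb : |b| = ‖y‖) (hab : |a + b| = ‖x + y‖) :
    ⟪x, y⟫_ℝ = a * b := by
  have := norm_add_sq_real x y
  rw [← ha, ← hb, ← hab, sq_abs, sq_abs, sq_abs] at this
  linarith

section
variable {k l : EuclideanSpace ℝ (Fin 2)}

lemma IsResonant.inner_eq (h : IsResonant k l) : ⟪l, k⟫_ℝ = sg l * sg k * ‖l‖ * ‖k‖ := by
  rw [real_inner_comm, real_inner_eq_mul_of_abs_eq (abs_sg_mul_norm k) (abs_sg_mul_norm l)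
    (by rw [h, abs_sg_mul_norm])]
  ring

lemma IsResonant.inner_add_eq (h : IsResonant k l) :
    ⟪l, k + l⟫_ℝ = sg l * sg (k + l) * ‖l‖ * ‖k + l‖ := by
  have hsum : |sg l * ‖l‖ + -(sg (k + l) * ‖k + l‖)| = ‖l + -(k + l)‖ := by
    rw [← h, show l + -(k + l) = -k by abel, norm_neg,
      show sg l * ‖l‖ + -(sg k * ‖k‖ + sg l * ‖l‖) = -(sg k * ‖k‖) by ring, abs_neg,
      abs_sg_mul_norm]
  have hneg := real_inner_eq_mul_of_abs_eq (abs_sg_mul_norm l)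
    (by rw [abs_neg, abs_sg_mul_norm, norm_neg]) hsum
  rw [inner_neg_right, neg_eq_iff_eq_neg] at hneg
  rw [hneg]
  ring

lemma IsResonant.exists_eq_smul (hk : k ≠ 0) (hl : l ≠ 0) (h : IsResonant k l) :
    ∃ t : ℝ, t ≠ 0 ∧ l = t • k := by
  refine (norm_inner_eq_norm_iff hk hl).mp ?_
  rw [real_inner_comm, h.inner_eq, Real.norm_eq_abs, mul_assoc, abs_mul, abs_mul, abs_sg,
    abs_sg, abs_mul, abs_norm, abs_norm]
  ring

lemma isResonant_smul_right (k : EuclideanSpace ℝ (Fin 2)) (t : ℝ) : IsResonant k (t • k) := by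
  unfold IsResonant
  rw [show k + t • k = (1 + t) • k by module, sg_smul_mul_norm, sg_smul_mul_norm]
  ring

end

/-- For nonzero `k, l ∈ ℝ²` with `m = k + l ≠ 0`, the resonance
relation `sg(k)|k| + sg(l)|l| = sg(m)|m|` holds if and only if `k` and `l` are
colinear (`l = t·k` with `t ≠ 0`, `t ≠ −1`); moreover, under the resonance
relation one has `l·k = sg(l)sg(k)|l||k|` and `l·m = sg(l)sg(m)|l||m|`. -/
theorem resonance_iff_colinear
    (k l : EuclideanSpace ℝ (Fin 2)) (hk : k ≠ 0) (hl : l ≠ 0) (hm : k + l ≠ 0) :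
    (sg k * ‖k‖ + sg l * ‖l‖ = sg (k + l) * ‖k + l‖ ↔
      ∃ t : ℝ, t ≠ 0 ∧ t ≠ -1 ∧ l = t • k)
    ∧ (sg k * ‖k‖ + sg l * ‖l‖ = sg (k + l) * ‖k + l‖ →
        (inner ℝ l k : ℝ) = sg l * sg k * ‖l‖ * ‖k‖
        ∧ (inner ℝ l (k + l) : ℝ) = sg l * sg (k + l) * ‖l‖ * ‖k + l‖) := by
  refine ⟨⟨fun h => ?_, ?_⟩, fun h => ⟨IsResonant.inner_eq h, IsResonant.inner_add_eq h⟩⟩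
  · obtain ⟨t, ht, rfl⟩ := IsResonant.exists_eq_smul hk hl h
    refine ⟨t, ht, ?_, rfl⟩
    rintro rfl
    exact hm (by simp)
  · rintro ⟨t, -, -, rfl⟩
    exact isResonant_smul_right k t
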